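/- The clients of cheap clusters are 2-approximately served by the nearest center to their optimal center: let ε ∈ (0, 1/12], n := |D| ≥ 3, opt := cost(OPT) > 0, cost(S) ≤ 5·opt, and for each o ∈ OPT with C_o ≠ ∅ fix an ε-quantile radius a_o with leaders L_o and average γ_o. Let 𝒞 ⊆ {o ∈ OPT : C_o ≠ ∅} be partitioned into three sets 𝒞_cov, 𝒞_light, 𝒞_V such that: every o ∈ 𝒞_cov satisfies d(o,S) ≤ (1+ε)·a_o + ε·γ_o; every o ∈ 𝒞_light satisfies Σ_{p∈L_o} d(p,S) ≤ ε⁵·opt/ln n, and moreover |𝒞_light| ≤ (ln n)/ε³; and Σ_{o∈𝒞_V} Σ_{p∈C_o} d(p,S) ≤ ε²·opt. Then Σ_{o∈𝒞} Σ_{p∈C_o} d(p, t(o)) ≤ 2·Σ_{o∈𝒞} Σ_{p∈C_o} d(p,o) + 20·ε·opt. -/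

import Mathlib

open Finset

/-- `d(p,S)`: distance from `p` to the closest point of `S` (junk `0` if `S = ∅`). -/
noncomputable def dS {X : Type*} [MetricSpace X] (p : X) (S : Finset X) : ℝ :=
  if h : S.Nonempty then S.inf' h (fun c => dist p c) else 0

/-- `cost(S) = Σ_{p∈D} d(p,S)`. -/
noncomputable def kmCost {X : Type*} [MetricSpace X] (D S : Finset X) : ℝ :=
  ∑ p ∈ D, dS p S

/-- The cluster of center `o` under assignment `σ`. -/
def cluster {X : Type*} [DecidableEq X] (D : Finset X) (σ : X → X) (o : X) : Finset X :=
  D.filter (fun p => σ p = o)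


/-!
A client `p ∈ C_o` reaches `t(o)` through `o`, so the cost of `𝒞` is at most
`Σ_o Σ_{p∈C_o} d(p,o) + Σ_o |C_o|·d(o,S)`, and it remains to charge `|C_o|·d(o,S)` to the
optimal cost of `C_o` plus `O(ε)·opt`. Since a `(1-ε)`-fraction of `C_o` lies at distance at least
`a_o` from `o`, we have `|C_o|·a_o ≤ (1+2ε)·Σ_{p∈C_o} d(p,o)`; for a covered cluster this bounds
`|C_o|·d(o,S)` directly. For a light cluster with `d(o,S) > a_o`, every leader `p` has
`d(o,S) - a_o ≤ d(p,S)`, so the `ε|C_o|` leaders pay for `|C_o|·(d(o,S) - a_o)` up to a factor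
`1/ε`, and there are at most `ln n / ε³` light clusters. For a `V`-cluster, averaging
`d(o,S) ≤ d(o,p) + d(p,S)` over `C_o` suffices.
-/

section Metric

variable {X : Type*} [MetricSpace X]

lemma dS_nonneg (p : X) (S : Finset X) : 0 ≤ dS p S := by
  unfold dS
  split_ifs with hS
  · exact le_inf' hS _ fun _ _ => dist_nonneg
  · exact le_rfl

lemma dS_le_dist {p c : X} {S : Finset X} (hc : c ∈ S) : dS p S ≤ dist p c := by
  rw [dS, dif_pos ⟨c, hc⟩]
  exact inf'_le _ hc

lemma dS_le_dist_add_dS (o p : X) (S : Finset X) : dS o S ≤ dist o p + dS p S := by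
  rcases S.eq_empty_or_nonempty with rfl | hS
  · simp [dS]
  · rw [show dS p S = S.inf' hS (dist p ·) from dif_pos hS, ← sub_le_iff_le_add']
    exact le_inf' hS _ fun c hc => by linarith [dS_le_dist (p := o) hc, dist_triangle o p c]

lemma sum_dist_le_sum_dist_add_card_mul (C : Finset X) (o c : X) :
    ∑ p ∈ C, dist p c ≤ ∑ p ∈ C, dist p o + #C * dist o c := by
  rw [← nsmul_eq_mul, ← sum_const, ← sum_add_distrib]
  exact sum_le_sum fun p _ => dist_triangle p o c

lemma card_mul_dS_le_sum_dist_add_sum_dS (C : Finset X) (o : X) (S : Finset X) :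
    #C * dS o S ≤ ∑ p ∈ C, dist p o + ∑ p ∈ C, dS p S := by
  rw [← nsmul_eq_mul, ← sum_const, ← sum_add_distrib]
  exact sum_le_sum fun p _ => dist_comm o p ▸ dS_le_dist_add_dS o p S

lemma card_mul_sub_le_sum_dS {L : Finset X} {o : X} {a : ℝ} (S : Finset X)
    (hL : ∀ p ∈ L, dist p o ≤ a) : #L * (dS o S - a) ≤ ∑ p ∈ L, dS p S := by
  rw [← nsmul_eq_mul]
  refine card_nsmul_le_sum _ _ _ fun p hp => ?_
  linarith [dS_le_dist_add_dS o p S, dist_comm p o, hL p hp]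

end Metric

lemma mul_card_filter_le_sum {ι : Type*} (s : Finset ι) {f : ι → ℝ} (hf : ∀ i ∈ s, 0 ≤ f i)
    (a : ℝ) : #{i ∈ s | a ≤ f i} * a ≤ ∑ i ∈ s, f i := by
  rw [← nsmul_eq_mul]
  calc _ ≤ ∑ i ∈ s with a ≤ f i, f i := card_nsmul_le_sum _ _ _ fun i hi => (mem_filter.1 hi).2
    _ ≤ _ := sum_le_sum_of_subset_of_nonneg (filter_subset _ _) fun i hi _ => hf i hi

lemma le_one_add_two_mul_of_one_sub_mul_le {ε x y : ℝ} (hε0 : 0 ≤ ε) (hε : ε ≤ 1 / 2)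
    (hx : 0 ≤ x) (h : (1 - ε) * x ≤ y) : x ≤ (1 + 2 * ε) * y := by
  nlinarith [mul_nonneg (mul_nonneg hε0 (by linarith : 0 ≤ 1 - 2 * ε)) hx,
    mul_le_mul_of_nonneg_left h (by linarith : 0 ≤ 1 + 2 * ε)]

section Quantile

variable {X : Type*} [MetricSpace X] {ε a : ℝ} {C S : Finset X} {o : X}

def IsQuantileRadius (ε : ℝ) (C : Finset X) (o : X) (a : ℝ) : Prop :=
  0 ≤ a ∧ ε * #C ≤ #{p ∈ C | dist p o ≤ a} ∧ (1 - ε) * #C ≤ #{p ∈ C | a ≤ dist p o}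

lemma IsQuantileRadius.card_mul_le (h : IsQuantileRadius ε C o a) (hε0 : 0 ≤ ε)
    (hε : ε ≤ 1 / 2) : #C * a ≤ (1 + 2 * ε) * ∑ p ∈ C, dist p o := by
  obtain ⟨ha, -, hfar⟩ := h
  refine le_one_add_two_mul_of_one_sub_mul_le hε0 hε (by positivity) ?_
  calc (1 - ε) * (#C * a) = (1 - ε) * #C * a := by ring
    _ ≤ #{p ∈ C | a ≤ dist p o} * a := mul_le_mul_of_nonneg_right hfar ha
    _ ≤ ∑ p ∈ C, dist p o := mul_card_filter_le_sum C (fun _ _ => dist_nonneg) a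

lemma IsQuantileRadius.card_mul_dS_le_of_covered (h : IsQuantileRadius ε C o a)
    (hε0 : 0 ≤ ε) (hε : ε ≤ 1 / 2)
    (hcov : dS o S ≤ (1 + ε) * a + ε * ((1 / #C) * ∑ p ∈ C, (dist p o + dS p S))) :
    #C * dS o S ≤ (1 + 5 * ε) * ∑ p ∈ C, dist p o + ε * ∑ p ∈ C, dS p S := by
  rcases C.eq_empty_or_nonempty with rfl | hC
  · simp
  have hCpos : (0 : ℝ) < #C := by exact_mod_cast hC.card_pos
  have hmul : #C * dS o S ≤ (1 + ε) * (#C * a) + ε * ∑ p ∈ C, (dist p o + dS p S) :=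
    calc _ ≤ #C * ((1 + ε) * a + ε * ((1 / #C) * ∑ p ∈ C, (dist p o + dS p S))) :=
          mul_le_mul_of_nonneg_left hcov hCpos.le
      _ = _ := by field_simp
  rw [sum_add_distrib] at hmul
  have hA : 0 ≤ ∑ p ∈ C, dist p o := sum_nonneg fun _ _ => dist_nonneg
  nlinarith [h.card_mul_le hε0 hε, mul_nonneg (mul_nonneg hε0 (by linarith : 0 ≤ 1 - 2 * ε)) hA]

lemma IsQuantileRadius.card_mul_dS_le_of_light (h : IsQuantileRadius ε C o a) (hε0 : 0 < ε)
    (hε : ε ≤ 1 / 2) :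
    #C * dS o S ≤ (1 + 2 * ε) * ∑ p ∈ C, dist p o + (∑ p ∈ C with dist p o ≤ a, dS p S) / ε := by
  have hfar := h.card_mul_le hε0.le hε
  suffices #C * (dS o S - a) ≤ (∑ p ∈ C with dist p o ≤ a, dS p S) / ε by linarith
  rcases le_or_gt (dS o S) a with hle | hgt
  · exact (mul_nonpos_of_nonneg_of_nonpos (by positivity) (by linarith)).trans
      (div_nonneg (sum_nonneg fun _ _ => dS_nonneg _ _) hε0.le)
  rw [le_div_iff₀ hε0]
  calc #C * (dS o S - a) * ε = ε * #C * (dS o S - a) := by ring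
    _ ≤ #{p ∈ C | dist p o ≤ a} * (dS o S - a) := mul_le_mul_of_nonneg_right h.2.1 (by linarith)
    _ ≤ _ := card_mul_sub_le_sum_dS S fun p hp => (mem_filter.1 hp).2

end Quantile

section ClusterFamily

variable {X : Type*} [MetricSpace X] {ε : ℝ} {S T : Finset X} {C : X → Finset X} {a : X → ℝ}

lemma sum_sum_dist_le_of_dist_eq_dS {t : X → X} (ht : ∀ o ∈ T, dist o (t o) = dS o S) :
    ∑ o ∈ T, ∑ p ∈ C o, dist p (t o)
      ≤ ∑ o ∈ T, ∑ p ∈ C o, dist p o + ∑ o ∈ T, #(C o) * dS o S := by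
  rw [← sum_add_distrib]
  exact sum_le_sum fun o ho => ht o ho ▸ sum_dist_le_sum_dist_add_card_mul (C o) o (t o)

lemma sum_card_mul_dS_le :
    ∑ o ∈ T, #(C o) * dS o S ≤ ∑ o ∈ T, ∑ p ∈ C o, dist p o + ∑ o ∈ T, ∑ p ∈ C o, dS p S := by
  rw [← sum_add_distrib]
  exact sum_le_sum fun o _ => card_mul_dS_le_sum_dist_add_sum_dS (C o) o S

lemma sum_card_mul_dS_le_of_covered (hq : ∀ o ∈ T, IsQuantileRadius ε (C o) o (a o))
    (hε0 : 0 ≤ ε) (hε : ε ≤ 1 / 2)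
    (hcov : ∀ o ∈ T, dS o S ≤ (1 + ε) * a o
      + ε * ((1 / #(C o)) * ∑ p ∈ C o, (dist p o + dS p S))) :
    ∑ o ∈ T, #(C o) * dS o S
      ≤ (1 + 5 * ε) * ∑ o ∈ T, ∑ p ∈ C o, dist p o + ε * ∑ o ∈ T, ∑ p ∈ C o, dS p S := by
  rw [mul_sum, mul_sum, ← sum_add_distrib]
  exact sum_le_sum fun o ho => (hq o ho).card_mul_dS_le_of_covered hε0 hε (hcov o ho)

lemma sum_card_mul_dS_le_of_light {L c : ℝ} (hq : ∀ o ∈ T, IsQuantileRadius ε (C o) o (a o))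
    (hε0 : 0 < ε) (hε : ε ≤ 1 / 2) (hL : 0 ≤ L) (hc : 0 ≤ c)
    (hlight : ∀ o ∈ T, ∑ p ∈ C o with dist p o ≤ a o, dS p S ≤ ε ^ 5 * c / L)
    (hcard : (#T : ℝ) ≤ L / ε ^ 3) :
    ∑ o ∈ T, #(C o) * dS o S ≤ (1 + 2 * ε) * ∑ o ∈ T, ∑ p ∈ C o, dist p o + ε * c := by
  calc ∑ o ∈ T, #(C o) * dS o S
      ≤ ∑ o ∈ T, ((1 + 2 * ε) * ∑ p ∈ C o, dist p o + ε ^ 5 * c / L / ε) :=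
        sum_le_sum fun o ho => ((hq o ho).card_mul_dS_le_of_light hε0 hε).trans <| by
          gcongr; exact hlight o ho
    _ = (1 + 2 * ε) * ∑ o ∈ T, ∑ p ∈ C o, dist p o + #T * (ε ^ 5 * c / L / ε) := by
        rw [sum_add_distrib, mul_sum, sum_const, nsmul_eq_mul]
    _ ≤ (1 + 2 * ε) * ∑ o ∈ T, ∑ p ∈ C o, dist p o + L / ε ^ 3 * (ε ^ 5 * c / L / ε) := by
        gcongr
    _ = (1 + 2 * ε) * ∑ o ∈ T, ∑ p ∈ C o, dist p o + ε * c * (L / L) := by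
        field_simp
    _ ≤ (1 + 2 * ε) * ∑ o ∈ T, ∑ p ∈ C o, dist p o + ε * c :=
        add_le_add_right (mul_le_of_le_one_right (by positivity) (div_self_le_one L)) _

end ClusterFamily

section Clusters

variable {X : Type*} [DecidableEq X] (D : Finset X) (σ : X → X)

lemma sum_sum_cluster_le_sum (T : Finset X) {f : X → ℝ} (hf : ∀ p ∈ D, 0 ≤ f p) :
    ∑ o ∈ T, ∑ p ∈ cluster D σ o, f p ≤ ∑ p ∈ D, f p :=
  sum_fiberwise_le_sum_of_sum_fiber_nonneg fun _ _ =>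
    sum_nonneg fun p hp => hf p (mem_filter.1 hp).1

lemma sum_sum_cluster_dist_le_kmCost [MetricSpace X] {OPT : Finset X}
    (hσ : ∀ p ∈ D, dist p (σ p) = dS p OPT) (T : Finset X) :
    ∑ o ∈ T, ∑ p ∈ cluster D σ o, dist p o ≤ kmCost D OPT :=
  calc _ = ∑ o ∈ T, ∑ p ∈ cluster D σ o, dS p OPT :=
        sum_congr rfl fun o _ => sum_congr rfl fun p hp => by
          obtain ⟨hpD, rfl⟩ := mem_filter.1 hp
          exact hσ p hpD
    _ ≤ _ := sum_sum_cluster_le_sum D σ T fun p _ => dS_nonneg p OPT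

end Clusters

theorem cheap_clusters_cost_bound_general {X : Type*} [MetricSpace X] [DecidableEq X]
    (D : Finset X)
    (ε : ℝ) (hε0 : 0 < ε) (hε1 : ε ≤ 1 / 12)
    (OPT : Finset X)
    (σ : X → X) (hσ : ∀ p ∈ D, σ p ∈ OPT ∧ dist p (σ p) = dS p OPT)
    (S : Finset X)
    (t : X → X) (ht : ∀ o ∈ OPT, t o ∈ S ∧ dist o (t o) = dS o S)
    (h5 : kmCost D S ≤ 5 * kmCost D OPT)
    -- `a o` is an ε-quantile radius for each nonempty cluster:
    (a : X → ℝ)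
    (hquant : ∀ o ∈ OPT, (cluster D σ o).Nonempty →
      0 ≤ a o ∧
      ε * ((cluster D σ o).card : ℝ)
        ≤ (((cluster D σ o).filter (fun p => dist p o ≤ a o)).card : ℝ) ∧
      (1 - ε) * ((cluster D σ o).card : ℝ)
        ≤ (((cluster D σ o).filter (fun p => a o ≤ dist p o)).card : ℝ))
    -- the three parts of 𝒞:
    (Ccov Clight CV : Finset X)
    (hCcov : ∀ o ∈ Ccov, o ∈ OPT ∧ (cluster D σ o).Nonempty)
    (hClight : ∀ o ∈ Clight, o ∈ OPT ∧ (cluster D σ o).Nonempty)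
    (hCV : ∀ o ∈ CV, o ∈ OPT ∧ (cluster D σ o).Nonempty)
    (hd1 : Disjoint Ccov Clight) (hd2 : Disjoint Ccov CV) (hd3 : Disjoint Clight CV)
    -- covered clusters:
    (hcov : ∀ o ∈ Ccov, dS o S ≤ (1 + ε) * a o
      + ε * ((1 / ((cluster D σ o).card : ℝ))
          * ∑ p ∈ cluster D σ o, (dist p o + dS p S)))
    -- light clusters: their leaders are cheap in S, and there are few of them:
    (hlight : ∀ o ∈ Clight,
      ∑ p ∈ (cluster D σ o).filter (fun p => dist p o ≤ a o), dS p S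
        ≤ ε ^ 5 * kmCost D OPT / Real.log D.card)
    (hlightcard : ((Clight.card : ℝ)) ≤ Real.log D.card / ε ^ 3)
    -- the V clusters have small total cost in S:
    (hV : ∑ o ∈ CV, ∑ p ∈ cluster D σ o, dS p S ≤ ε ^ 2 * kmCost D OPT) :
    ∑ o ∈ Ccov ∪ Clight ∪ CV, ∑ p ∈ cluster D σ o, dist p (t o)
      ≤ 2 * (∑ o ∈ Ccov ∪ Clight ∪ CV, ∑ p ∈ cluster D σ o, dist p o)
        + 20 * ε * kmCost D OPT := by
  have hε : ε ≤ 1 / 2 := by linarith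
  have hopt : 0 ≤ kmCost D OPT := sum_nonneg fun p _ => dS_nonneg p OPT
  have hsplit (g : X → ℝ) : ∑ o ∈ Ccov ∪ Clight ∪ CV, g o
      = ∑ o ∈ Ccov, g o + ∑ o ∈ Clight, g o + ∑ o ∈ CV, g o := by
    rw [sum_union (disjoint_union_left.2 ⟨hd2, hd3⟩), sum_union hd1]
  have hOPT : ∀ o ∈ Ccov ∪ Clight ∪ CV, o ∈ OPT := by
    simp only [mem_union]
    rintro o ((ho | ho) | ho)
    exacts [(hCcov o ho).1, (hClight o ho).1, (hCV o ho).1]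
  have hreroute := sum_sum_dist_le_of_dist_eq_dS (C := cluster D σ) fun o ho => (ht o (hOPT o ho)).2
  have hcovS := sum_card_mul_dS_le_of_covered
    (fun o ho => hquant o (hCcov o ho).1 (hCcov o ho).2) hε0.le hε hcov
  have hlightS := sum_card_mul_dS_le_of_light
    (fun o ho => hquant o (hClight o ho).1 (hClight o ho).2) hε0 hε (Real.log_natCast_nonneg _)
    hopt hlight hlightcard
  have hVS := sum_card_mul_dS_le (T := CV) (C := cluster D σ) (S := S)
  have hcovCost := (sum_sum_cluster_le_sum D σ Ccov fun p _ => dS_nonneg p S).trans h5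
  have hOptCost := sum_sum_cluster_dist_le_kmCost D σ (fun p hp => (hσ p hp).2) (Ccov ∪ Clight ∪ CV)
  have hA0 (T : Finset X) : 0 ≤ ∑ o ∈ T, ∑ p ∈ cluster D σ o, dist p o :=
    sum_nonneg fun _ _ => sum_nonneg fun _ _ => dist_nonneg
  have hεsq : ε ^ 2 * kmCost D OPT ≤ ε * kmCost D OPT := by gcongr; nlinarith
  simp only [hsplit] at hreroute hOptCost ⊢
  linarith [mul_le_mul_of_nonneg_left hcovCost hε0.le, mul_le_mul_of_nonneg_left hOptCost hε0.le,
    mul_nonneg hε0.le (hA0 Clight), mul_nonneg hε0.le (hA0 CV), mul_nonneg hε0.le hopt]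

/-- The clients of cheap clusters are 2-approximately served by the nearest center
`t(o) ∈ S` to their optimal center: for the union `𝒞 = 𝒞_cov ∪ 𝒞_light ∪ 𝒞_V` of covered,
light and `V`-clusters,
`Σ_{o∈𝒞} Σ_{p∈C_o} d(p,t(o)) ≤ 2·Σ_{o∈𝒞} Σ_{p∈C_o} d(p,o) + 20·ε·opt`. -/
theorem cheap_clusters_cost_bound {X : Type*} [MetricSpace X] [DecidableEq X]
    (D F : Finset X) (hD3 : 3 ≤ D.card)
    (ε : ℝ) (hε0 : 0 < ε) (hε1 : ε ≤ 1 / 12)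
    (OPT : Finset X) (hOPTne : OPT.Nonempty) (hOPTF : OPT ⊆ F)
    (σ : X → X) (hσ : ∀ p ∈ D, σ p ∈ OPT ∧ dist p (σ p) = dS p OPT)
    (S : Finset X) (hSne : S.Nonempty) (hSF : S ⊆ F)
    (t : X → X) (ht : ∀ o ∈ OPT, t o ∈ S ∧ dist o (t o) = dS o S)
    (hoptpos : 0 < kmCost D OPT)
    (h5 : kmCost D S ≤ 5 * kmCost D OPT)
    -- `a o` is an ε-quantile radius for each nonempty cluster:
    (a : X → ℝ)
    (hquant : ∀ o ∈ OPT, (cluster D σ o).Nonempty →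
      0 ≤ a o ∧
      ε * ((cluster D σ o).card : ℝ)
        ≤ (((cluster D σ o).filter (fun p => dist p o ≤ a o)).card : ℝ) ∧
      (1 - ε) * ((cluster D σ o).card : ℝ)
        ≤ (((cluster D σ o).filter (fun p => a o ≤ dist p o)).card : ℝ))
    -- the three parts of 𝒞:
    (Ccov Clight CV : Finset X)
    (hCcov : ∀ o ∈ Ccov, o ∈ OPT ∧ (cluster D σ o).Nonempty)
    (hClight : ∀ o ∈ Clight, o ∈ OPT ∧ (cluster D σ o).Nonempty)
    (hCV : ∀ o ∈ CV, o ∈ OPT ∧ (cluster D σ o).Nonempty)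
    (hd1 : Disjoint Ccov Clight) (hd2 : Disjoint Ccov CV) (hd3 : Disjoint Clight CV)
    -- covered clusters:
    (hcov : ∀ o ∈ Ccov, dS o S ≤ (1 + ε) * a o
      + ε * ((1 / ((cluster D σ o).card : ℝ))
          * ∑ p ∈ cluster D σ o, (dist p o + dS p S)))
    -- light clusters: their leaders are cheap in S, and there are few of them:
    (hlight : ∀ o ∈ Clight,
      ∑ p ∈ (cluster D σ o).filter (fun p => dist p o ≤ a o), dS p S
        ≤ ε ^ 5 * kmCost D OPT / Real.log D.card)
    (hlightcard : ((Clight.card : ℝ)) ≤ Real.log D.card / ε ^ 3)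
    -- the V clusters have small total cost in S:
    (hV : ∑ o ∈ CV, ∑ p ∈ cluster D σ o, dS p S ≤ ε ^ 2 * kmCost D OPT) :
    ∑ o ∈ Ccov ∪ Clight ∪ CV, ∑ p ∈ cluster D σ o, dist p (t o)
      ≤ 2 * (∑ o ∈ Ccov ∪ Clight ∪ CV, ∑ p ∈ cluster D σ o, dist p o)
        + 20 * ε * kmCost D OPT :=
  cheap_clusters_cost_bound_general D ε hε0 hε1 OPT σ hσ S t ht h5 a hquant Ccov Clight CV hCcov
    hClight hCV hd1 hd2 hd3 hcov hlight hlightcard hV
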